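/- Let G be a compact metrizable topological group acting continuously on the Stone–Čech compactification βℕ of the discrete space ℕ (i.e. the action map G × βℕ → βℕ is jointly continuous). Then every orbit G·x, x ∈ βℕ, is finite; consequently the stabilizer of every point is an open subgroup of G. -/

import Mathlib

open Topology Filter

/-!
A convergent sequence in an extremally disconnected Hausdorff space is eventually constant:
otherwise a subsequence can be enclosed in pairwise disjoint open sets, and the unions of the
even-indexed and of the odd-indexed ones are disjoint open sets whose closures both contain the
limit, although closures of disjoint open sets are disjoint in such a space. Hence sequentially
compact subsets are finite there. An orbit of a compact metrizable group is a continuous image of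
a sequentially compact space, so it is finite when the space is `βℕ`; each orbit point is then
isolated in the orbit, so stabilizers are open.
-/

open Set Function

section SeparatedSubsequence

variable {X : Type*} [TopologicalSpace X] [T2Space X]

theorem exists_pairwise_disjoint_isOpen_of_tendsto {u : ℕ → X} {x : X}
    (hu : Tendsto u atTop (𝓝 x)) (hne : ∃ᶠ n in atTop, u n ≠ x) :
    ∃ (U : ℕ → Set X) (k : ℕ → ℕ), (∀ n, IsOpen (U n)) ∧ Pairwise (Disjoint on U) ∧
      (∀ n, u (k n) ∈ U n) ∧ Tendsto k atTop atTop := by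
  have : Std.Symm (α := Set X) Disjoint := ⟨fun _ _ h ↦ h.symm⟩
  obtain ⟨U, hU, hdisj⟩ := exists_seq_of_forall_finset_exists'
    (fun V : Set X ↦ IsOpen V ∧ Vᶜ ∈ 𝓝 x ∧ ∃ m, u m ∈ V) Disjoint fun S hS ↦ by
      have hW : (⋂ V ∈ S, interior Vᶜ) ∈ 𝓝 x :=
        (Finset.iInter_mem_sets S).2 fun V hV ↦ interior_mem_nhds.2 (hS V hV).2.1
      obtain ⟨m, hmx, hmW⟩ := (hne.and_eventually (hu hW)).exists
      obtain ⟨P, Q, hPo, hQo, hmP, hxQ, hPQ⟩ := t2_separation hmx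
      refine ⟨P ∩ ⋂ V ∈ S, interior Vᶜ,
        ⟨hPo.inter (isOpen_biInter_finset fun _ _ ↦ isOpen_interior), ?_, m, hmP, hmW⟩,
        fun V hV ↦ ?_⟩
      · exact mem_of_superset (hQo.mem_nhds hxQ) fun z hzQ hzP ↦
          disjoint_left.1 hPQ hzP.1 hzQ
      · exact disjoint_left.2 fun z hzV hz ↦
          interior_subset (mem_iInter₂.1 hz.2 V hV) hzV
  choose k hk using fun n ↦ (hU n).2.2
  have hk_inj : Injective k := fun m n hmn ↦
    hdisj.eq (not_disjoint_iff.2 ⟨u (k m), hk m, hmn ▸ hk n⟩)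
  exact ⟨U, k, fun n ↦ (hU n).1, hdisj, hk,
    Nat.cofinite_eq_atTop ▸ hk_inj.tendsto_cofinite⟩

end SeparatedSubsequence

section ExtremallyDisconnected

variable {X : Type*} [TopologicalSpace X] [ExtremallyDisconnected X] [T2Space X]

theorem ExtremallyDisconnected.eventually_eq_of_tendsto {u : ℕ → X} {x : X}
    (hu : Tendsto u atTop (𝓝 x)) : ∀ᶠ n in atTop, u n = x := by
  by_contra hne
  obtain ⟨U, k, hUo, hdisj, hk, hk_top⟩ :=
    exists_pairwise_disjoint_isOpen_of_tendsto hu (not_eventually.1 hne)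
  have mem_closure_iUnion {e : ℕ → ℕ} (he : StrictMono e) : x ∈ closure (⋃ n, U (e n)) :=
    mem_closure_of_tendsto (hu.comp (hk_top.comp he.tendsto_atTop))
      (Eventually.of_forall fun n ↦ mem_iUnion.2 ⟨n, hk (e n)⟩)
  have hclosures := ExtremallyDisconnected.disjoint_closure_of_disjoint_isOpen
    (disjoint_iUnion_left.2 fun m ↦ disjoint_iUnion_right.2 fun n ↦ hdisj (by omega))
    (isOpen_iUnion fun n ↦ hUo (2 * n)) (isOpen_iUnion fun n ↦ hUo (2 * n + 1))
  exact disjoint_left.1 hclosures (mem_closure_iUnion fun a b h ↦ by omega)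
    (mem_closure_iUnion fun a b h ↦ by omega)

theorem IsSeqCompact.finite_of_extremallyDisconnected {s : Set X} (hs : IsSeqCompact s) :
    s.Finite := by
  by_contra hinf
  let v : ℕ ↪ s := Set.Infinite.natEmbedding s hinf
  obtain ⟨a, -, φ, hφ, hlim⟩ := hs fun n ↦ (v n).2
  obtain ⟨N, hN⟩ := (ExtremallyDisconnected.eventually_eq_of_tendsto hlim).exists_forall_of_atTop
  have : φ N = φ (N + 1) :=
    v.injective (Subtype.ext ((hN N le_rfl).trans (hN (N + 1) N.le_succ).symm))
  exact absurd this (hφ N.lt_succ_self).ne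

end ExtremallyDisconnected

theorem Continuous.isOpen_preimage_singleton_of_finite_range {X Y : Type*} [TopologicalSpace X]
    [TopologicalSpace Y] [T1Space Y] {f : X → Y} (hf : Continuous f) (hfin : (range f).Finite)
    (y : Y) : IsOpen (f ⁻¹' {y}) := by
  have : f ⁻¹' {y} = (f ⁻¹' (range f \ {y}))ᶜ := by
    ext z
    simp
  rw [this]
  exact (hfin.sdiff.isClosed.preimage hf).isOpen_compl

theorem orbits_finite_stabilizers_open_general
    {G : Type*} [TopologicalSpace G] [CompactSpace G]
    [TopologicalSpace.MetrizableSpace G] [Group G]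
    (A : G → StoneCech ℕ → StoneCech ℕ)
    (hA_cont : Continuous fun p : G × StoneCech ℕ => A p.1 p.2)
    (hA_one : ∀ y : StoneCech ℕ, A 1 y = y)
    (hA_mul : ∀ (g h : G) (y : StoneCech ℕ), A (g * h) y = A g (A h y)) :
    ∀ x : StoneCech ℕ,
      (Set.range fun g : G => A g x).Finite ∧
      ∃ H : Subgroup G, (H : Set G) = {g : G | A g x = x} ∧ IsOpen (H : Set G) := by
  intro x
  have : ExtremallyDisconnected (StoneCech ℕ) := StoneCech.projective.extremallyDisconnected
  let _ : MulAction G (StoneCech ℕ) := { smul := A, one_smul := hA_one, mul_smul := hA_mul }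
  have horbit_cont : Continuous fun g : G => A g x := hA_cont.comp (.prodMk_left x)
  have horbit_finite : (range fun g : G => A g x).Finite :=
    (IsSeqCompact.range horbit_cont.seqContinuous).finite_of_extremallyDisconnected
  exact ⟨horbit_finite, MulAction.stabilizer G x, rfl,
    horbit_cont.isOpen_preimage_singleton_of_finite_range horbit_finite x⟩

/-- **Orbits of a compact metrizable group acting on `βℕ` are finite, and stabilizers
are open subgroups.**
Let `G` be a compact metrizable topological group acting continuously on the
Stone–Čech compactification `βℕ` of the discrete space `ℕ`.  Then every orbit
`{A g x : g ∈ G}` is finite, and the stabilizer `{g : A g x = x}` of every point is an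
open subgroup of `G`. -/
theorem orbits_finite_stabilizers_open
    {G : Type*} [TopologicalSpace G] [CompactSpace G]
    [TopologicalSpace.MetrizableSpace G] [Group G] [IsTopologicalGroup G]
    (A : G → StoneCech ℕ → StoneCech ℕ)
    (hA_cont : Continuous fun p : G × StoneCech ℕ => A p.1 p.2)
    (hA_one : ∀ y : StoneCech ℕ, A 1 y = y)
    (hA_mul : ∀ (g h : G) (y : StoneCech ℕ), A (g * h) y = A g (A h y)) :
    ∀ x : StoneCech ℕ,
      (Set.range fun g : G => A g x).Finite ∧
      ∃ H : Subgroup G, (H : Set G) = {g : G | A g x = x} ∧ IsOpen (H : Set G) :=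
  orbits_finite_stabilizers_open_general A hA_cont hA_one hA_mul
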